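/- Let C be a concept class that is isometric, and let c_1,…,c_m be an ordering of all concepts of C with level sets C_i = {c_1,…,c_i}. Then the following are equivalent: (1) every level set C_i is ample; (2) every c_i is a corner of C_i; (3) every level set C_i is isometric; (4) every level set C_i is weakly isometric. -/

import Mathlib

variable {X : Type} [Fintype X] [DecidableEq X]

/-- Hamming distance between two subsets of `X` (size of symmetric difference). -/
def hdist (c c' : Finset X) : ℕ := ((c \ c') ∪ (c' \ c)).card

/-- The restriction `C|Y = {c ∩ Y : c ∈ C}`. -/
def restrictTo (C : Finset (Finset X)) (Y : Finset X) : Finset (Finset X) :=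
  C.image (· ∩ Y)

/-- `Y` is shattered by `C`, i.e. `C|Y = 2^Y`. -/
def Shatters (C : Finset (Finset X)) (Y : Finset X) : Prop :=
  ∀ s ∈ Y.powerset, ∃ c ∈ C, c ∩ Y = s

instance (C : Finset (Finset X)) : DecidablePred (Shatters C) := fun _ => by
  unfold Shatters; infer_instance

/-- The family `X̄(C)` of all sets shattered by `C`. -/
def shatteredSets (C : Finset (Finset X)) : Finset (Finset X) :=
  Finset.univ.filter (Shatters C)

/-- The VC dimension of `C`: maximum size of a shattered set. -/
def vcDim (C : Finset (Finset X)) : ℕ := (shatteredSets C).sup Finset.card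

/-- `C` is ample: `|C| = |X̄(C)|`. -/
def IsAmple (C : Finset (Finset X)) : Prop := C.card = (shatteredSets C).card

/-- `C` is a maximum class of VC dimension `d`. -/
def IsMaximumClass (C : Finset (Finset X)) (d : ℕ) : Prop :=
  vcDim C = d ∧ C.card = ∑ i ∈ Finset.range (d + 1), (Fintype.card X).choose i

/-- `B` is a cube with support `Y`: `B = {t ∪ s : s ⊆ Y}` for some `t ⊆ X \ Y`. -/
def IsCubeS (B : Finset (Finset X)) (Y : Finset X) : Prop :=
  ∃ t : Finset X, t ∩ Y = ∅ ∧ B = Y.powerset.image (fun s => t ∪ s)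

/-- `B` is a cube. -/
def IsCube (B : Finset (Finset X)) : Prop := ∃ Y, IsCubeS B Y

/-- `B` is a cube of `C`: a cube contained in `C`. -/
def IsCubeOf (C B : Finset (Finset X)) : Prop := B ⊆ C ∧ IsCube B

/-- `B` is a maximal cube of `C` (maximal under inclusion among cubes of `C`). -/
def IsMaximalCubeOf (C B : Finset (Finset X)) : Prop :=
  IsCubeOf C B ∧ ∀ B', IsCubeOf C B' → B ⊆ B' → B = B'

/-- `c` is a corner of `C`: a concept of `C` belonging to a unique maximal cube of `C`. -/
def IsCornerOf (C : Finset (Finset X)) (c : Finset X) : Prop :=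
  c ∈ C ∧ ∃! B, IsMaximalCubeOf C B ∧ c ∈ B

/-- The one-inclusion graph `G(C)`. -/
def oneInclusionGraph (C : Finset (Finset X)) : SimpleGraph {c : Finset X // c ∈ C} where
  Adj c c' := hdist c.1 c'.1 = 1
  symm := by
    constructor
    intro a b h
    simpa [hdist, Finset.union_comm] using h
  loopless := by
    constructor
    intro a h
    simp [hdist] at h

/-- `C` is isometric: `G(C)` is connected and graph distances equal Hamming distances. -/
def IsIsometric (C : Finset (Finset X)) : Prop :=
  (oneInclusionGraph C).Connected ∧
  ∀ c c' : {c : Finset X // c ∈ C}, (oneInclusionGraph C).dist c c' = hdist c.1 c'.1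

/-- `C` is weakly isometric: `G(C)` is connected and graph distances equal Hamming
distances for pairs at Hamming distance at most 2. -/
def IsWeaklyIsometric (C : Finset (Finset X)) : Prop :=
  (oneInclusionGraph C).Connected ∧
  ∀ c c' : {c : Finset X // c ∈ C}, hdist c.1 c'.1 ≤ 2 →
    (oneInclusionGraph C).dist c c' = hdist c.1 c'.1

/-- A list of concepts is a corner peeling if it has no duplicates and each element is a
corner of the corresponding level set. -/
def IsCornerPeeling (l : List (Finset X)) : Prop :=
  l.Nodup ∧ ∀ i (h : i < l.length), IsCornerOf ((l.take (i + 1)).toFinset) (l.get ⟨i, h⟩)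

/-- `C` is dismantlable: it admits a corner peeling ordering of all its concepts. -/
def Dismantlable (C : Finset (Finset X)) : Prop :=
  ∃ l : List (Finset X), l.toFinset = C ∧ IsCornerPeeling l

/-- Non-clashing condition for a map `r`. -/
def NonClashing (C : Finset (Finset X)) (r : Finset X → Finset X) : Prop :=
  ∀ c ∈ C, ∀ c' ∈ C, c ≠ c' → c ∩ (r c ∪ r c') ≠ c' ∩ (r c ∪ r c')

/-- `r` is a representation map for `C`: a non-clashing bijection from `C` onto `X̄(C)`. -/
def IsRepMap (C : Finset (Finset X)) (r : Finset X → Finset X) : Prop :=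
  (∀ c ∈ C, r c ∈ shatteredSets C) ∧
  Set.InjOn r ↑C ∧
  (∀ Y ∈ shatteredSets C, ∃ c ∈ C, r c = Y) ∧
  NonClashing C r

/-- `C` admits an unlabeled sample compression scheme of size `k`. -/
def HasUSCS (C : Finset (Finset X)) (k : ℕ) : Prop :=
  ∃ (α : Finset X → Finset X → Finset X) (β : Finset X → Finset X),
    ∀ (Y : Finset X), ∀ c ∈ C,
      α Y (c ∩ Y) ⊆ Y ∧ (α Y (c ∩ Y)).card ≤ k ∧
      β (α Y (c ∩ Y)) ∈ C ∧ β (α Y (c ∩ Y)) ∩ Y = c ∩ Y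

/-- The cube of `2^X` with support `Y` containing `c`. -/
def cubeAt (c Y : Finset X) : Finset (Finset X) :=
  Y.powerset.image (fun s => (c \ Y) ∪ s)

/-- Condition (C1): for every `c ∈ C`, the cube with support `r c` containing `c`
is a cube of `C`. -/
def CondC1 (C : Finset (Finset X)) (r : Finset X → Finset X) : Prop :=
  ∀ c ∈ C, cubeAt c (r c) ⊆ C

/-- Condition (C2): every cube of `C` has a unique concept `c` with `r c ∩ supp B = ∅`. -/
def CondC2 (C : Finset (Finset X)) (r : Finset X → Finset X) : Prop :=
  ∀ B Y, B ⊆ C → IsCubeS B Y → ∃! c, c ∈ B ∧ r c ∩ Y = ∅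

/-- The facet of the cross-polytope corresponding to a subset `c ⊆ X`:
`+x ∈ σ_c` iff `x ∈ c` (where `+x = Sum.inl x` and `-x = Sum.inr x`). -/
def facet (c : Finset X) : Finset (X ⊕ X) :=
  c.image Sum.inl ∪ (Finset.univ \ c).image Sum.inr

/-- A list of facets of the cross-polytope is a partial shelling. -/
def IsPartialShelling (L : List (Finset (X ⊕ X))) : Prop :=
  L.Nodup ∧ ∀ i j, i < j → j < L.length →
    ∃ k < j, ((L.getD k ∅) ∩ (L.getD j ∅)).card = Fintype.card X - 1 ∧
      (L.getD i ∅) ∩ (L.getD j ∅) ⊆ (L.getD k ∅) ∩ (L.getD j ∅)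

/-- `Q` is an incomplete cube for `(C, D)` with support `σ`: a cube of `C` whose
support `σ` is a missed simplex (shattered by `C` but not by `D`). -/
def IsIncompleteCube (C D Q : Finset (Finset X)) (σ : Finset X) : Prop :=
  Q ⊆ C ∧ IsCubeS Q σ ∧ Shatters C σ ∧ ¬ Shatters D σ

/-- `c` is the source of the incomplete cube `Q` with support `σ`:
`c ∈ Q` and `c ∩ σ ∉ D|σ`. -/
def IsSource (D Q : Finset (Finset X)) (σ : Finset X) (c : Finset X) : Prop :=
  c ∈ Q ∧ c ∩ σ ∉ restrictTo D σ

/-- The restriction `C_x = C|(X \ {x})`, with concepts viewed as subsets of `X`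
avoiding `x`. -/
def restrictX (C : Finset (Finset X)) (x : X) : Finset (Finset X) :=
  C.image (·.erase x)

/-- The reduction `C^x = {c ⊆ X \ {x} : c ∈ C and c ∪ {x} ∈ C}`. -/
def reduction (C : Finset (Finset X)) (x : X) : Finset (Finset X) :=
  C.filter (fun c => x ∉ c ∧ insert x c ∈ C)

/-- The interval `B(c,c') = {t : d(c,t) + d(t,c') = d(c,c')}`. -/
def interval (c c' : Finset X) : Finset (Finset X) :=
  Finset.univ.filter (fun t => hdist c t + hdist t c' = hdist c c')

/-- `C'` is convex in `C`. -/
def IsConvexIn (C C' : Finset (Finset X)) : Prop :=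
  ∀ c ∈ C', ∀ c'' ∈ C', interval c c'' ∩ C ⊆ C'

/-- `C'` is locally convex in `C`. -/
def IsLocallyConvexIn (C C' : Finset (Finset X)) : Prop :=
  ∀ c ∈ C', ∀ c'' ∈ C', hdist c c'' = 2 → interval c c'' ∩ C ⊆ C'

/-- `C` is a conditional antimatroid: contains `∅`, closed under intersection, and
every concept is generated by its extremal points. -/
def IsCondAntimatroid (C : Finset (Finset X)) : Prop :=
  ∅ ∈ C ∧ (∀ c ∈ C, ∀ c' ∈ C, c ∩ c' ∈ C) ∧
  ∀ c ∈ C, ∀ c' ∈ C, (c.filter (fun x => c.erase x ∈ C)) ⊆ c' → c ⊆ c'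

/-!
Write `C_i = C_{i-1} ∪ {c_i}`. Pajor's inequality `|C| ≤ |X̄(C)|` holds for every class, so the
ample classes are those where it is an equality; then the reduction `C^x` is ample again, and
induction through reductions shows that every set shattered by an ample class is the support of
one of its cubes.

If `C_{i-1}` and `C_i` are ample, `C_i` shatters exactly one new set `Y`; the cube of `C_i` on `Y`
must contain `c_i`, and no cube at `c_i` can use a coordinate outside `Y` (flipping it would give a
concept of `C_{i-1}` with the trace of `c_i` on `Y`), so `c_i` is a corner. Conversely, if `C_i` is
isometric, a geodesic from `c_i` shows that every set newly shattered by `C_i` consists of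
coordinates `x` with `c_i Δ {x} ∈ C_{i-1}`, so there is at most one such set and ampleness passes
from `C_{i-1}` to `C_i`.

Isometry passes from `C_i` down to `C_{i-1}` as soon as every geodesic `a, c_i, b` of length two
can be rerouted inside `C_{i-1}`: for a corner through the fourth vertex of the square in its
cube, and for a weakly isometric `C_{i-1}` through a middle vertex of a geodesic in `C_{i-1}`.
Starting from the isometric `C = C_m` this gives the remaining implications.
-/

open scoped symmDiff Finset

section Hamming
variable {α : Type} [DecidableEq α]

lemma hdist_eq_card_symmDiff (a b : Finset α) : hdist a b = #(a ∆ b) := rfl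

lemma hdist_comm (a b : Finset α) : hdist a b = hdist b a := by
  rw [hdist_eq_card_symmDiff, hdist_eq_card_symmDiff, symmDiff_comm]

@[simp] lemma hdist_eq_zero {a b : Finset α} : hdist a b = 0 ↔ a = b := by
  rw [hdist_eq_card_symmDiff, Finset.card_eq_zero, ← Finset.bot_eq_empty, symmDiff_eq_bot]

@[simp] lemma hdist_self (a : Finset α) : hdist a a = 0 := hdist_eq_zero.2 rfl

lemma hdist_triangle (a b c : Finset α) : hdist a c ≤ hdist a b + hdist b c :=
  (Finset.card_le_card (symmDiff_triangle a b c)).trans (Finset.card_union_le _ _)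

lemma symmDiff_singleton_ne (c : Finset α) (z : α) : c ∆ {z} ≠ c := by
  rw [Ne, symmDiff_eq_left]
  exact Finset.singleton_ne_empty z

lemma hdist_symmDiff_singleton_of_notMem {c d : Finset α} {z : α} (hz : z ∉ c ∆ d) :
    hdist (c ∆ {z}) d = hdist c d + 1 := by
  have hdisj : Disjoint {z} (c ∆ d) := Finset.disjoint_singleton_left.2 hz
  rw [hdist_eq_card_symmDiff, hdist_eq_card_symmDiff, symmDiff_right_comm, symmDiff_comm,
    hdisj.symmDiff_eq_sup, Finset.sup_eq_union, Finset.card_union_of_disjoint hdisj,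
    Finset.card_singleton, add_comm]

lemma inter_symmDiff_singleton_of_notMem {Y c : Finset α} {z : α} (hz : z ∉ Y) :
    Y ∩ (c ∆ {z}) = Y ∩ c := by
  rw [← Finset.inf_eq_inter, inf_symmDiff_distrib_left]
  simp [Finset.inter_singleton_of_notMem hz]

end Hamming

section Cubes
variable {α : Type} [DecidableEq α] {c d Y Z : Finset α}

lemma mem_cubeAt : d ∈ cubeAt c Y ↔ c ∆ d ⊆ Y := by
  simp only [cubeAt, Finset.mem_image, Finset.mem_powerset]
  constructor
  · rintro ⟨s, hs, rfl⟩ z hz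
    have := @hs z
    simp only [Finset.mem_symmDiff, Finset.mem_union, Finset.mem_sdiff] at hz
    tauto
  · intro h
    refine ⟨d ∩ Y, Finset.inter_subset_right, ?_⟩
    ext z
    have := @h z
    simp only [Finset.mem_symmDiff] at this
    simp only [Finset.mem_union, Finset.mem_sdiff, Finset.mem_inter]
    tauto

lemma self_mem_cubeAt (c Y : Finset α) : c ∈ cubeAt c Y := by
  simp [mem_cubeAt]

lemma cubeAt_subset_cubeAt_iff : cubeAt c Z ⊆ cubeAt c Y ↔ Z ⊆ Y := by
  refine ⟨fun h => ?_, fun h d hd => (mem_cubeAt.1 hd).trans h |> mem_cubeAt.2⟩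
  have := mem_cubeAt.1 (h (mem_cubeAt.2 (symmDiff_symmDiff_cancel_left c Z).subset))
  rwa [symmDiff_symmDiff_cancel_left] at this

lemma cubeAt_eq_of_mem (hd : d ∈ cubeAt c Y) : cubeAt d Y = cubeAt c Y := by
  have hcd := mem_cubeAt.1 hd
  ext e
  simp only [mem_cubeAt]
  constructor
  · exact fun hde => (symmDiff_triangle c d e).trans (Finset.union_subset hcd hde)
  · exact fun hce => (symmDiff_triangle d c e).trans
      (Finset.union_subset (symmDiff_comm c d ▸ hcd) hce)

lemma isCubeS_cubeAt (c Y : Finset α) : IsCubeS (cubeAt c Y) Y :=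
  ⟨c \ Y, Finset.sdiff_inter_self Y c, rfl⟩

lemma IsCubeS.eq_cubeAt {B : Finset (Finset α)} (hB : IsCubeS B Y) (hc : c ∈ B) :
    B = cubeAt c Y := by
  obtain ⟨t, ht, rfl⟩ := hB
  have hBt : Y.powerset.image (fun s => t ∪ s) = cubeAt t Y := by
    rw [cubeAt, Finset.sdiff_eq_self_of_disjoint (Finset.disjoint_iff_inter_eq_empty.2 ht)]
  rw [hBt] at hc ⊢
  exact (cubeAt_eq_of_mem hc).symm

lemma cubeAt_shatters (c Y : Finset α) : (cubeAt c Y).Shatters Y := by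
  intro t ht
  refine ⟨c \ Y ∪ t, Finset.mem_image.2 ⟨t, Finset.mem_powerset.2 ht, rfl⟩, ?_⟩
  rw [Finset.inter_union_distrib_left, Finset.inter_sdiff_self, Finset.empty_union,
    Finset.inter_eq_right.2 ht]

lemma cubeAt_symmDiff_subset_pair (h : hdist c d = 1) : cubeAt c (c ∆ d) ⊆ {c, d} := by
  intro e he
  rw [hdist_eq_card_symmDiff, Finset.card_eq_one] at h
  obtain ⟨z, hz⟩ := h
  rw [mem_cubeAt, hz, Finset.subset_singleton_iff, ← hz,
    symmDiff_right_inj, ← Finset.bot_eq_empty, symmDiff_eq_bot] at he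
  rcases he with rfl | rfl <;> simp

end Cubes

section Corners
variable {α : Type} [DecidableEq α] {C : Finset (Finset α)} {c : Finset α}

lemma exists_isMaximalCubeOf_superset {Q : Finset (Finset α)} (hQ : IsCubeOf C Q) :
    ∃ M, IsMaximalCubeOf C M ∧ Q ⊆ M := by
  classical
  obtain ⟨M, hQM, hM⟩ := (C.powerset.filter (IsCubeOf C)).exists_le_maximal
    (Finset.mem_filter.2 ⟨Finset.mem_powerset.2 hQ.1, hQ⟩)
  have hcube : ∀ {B}, B ∈ C.powerset.filter (IsCubeOf C) ↔ IsCubeOf C B := fun {B} =>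
    ⟨fun h => (Finset.mem_filter.1 h).2,
      fun h => Finset.mem_filter.2 ⟨Finset.mem_powerset.2 h.1, h⟩⟩
  exact ⟨M, ⟨hcube.1 hM.1, fun B hB hMB => hM.eq_of_le (hcube.2 hB) hMB⟩, hQM⟩

lemma isCornerOf_iff :
    IsCornerOf C c ↔ ∃ Y, cubeAt c Y ⊆ C ∧ ∀ Z, cubeAt c Z ⊆ C → Z ⊆ Y := by
  constructor
  · rintro ⟨-, B, ⟨hBmax, hcB⟩, huniq⟩
    obtain ⟨Y, hY⟩ := hBmax.1.2
    rw [hY.eq_cubeAt hcB] at hBmax huniq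
    refine ⟨Y, hBmax.1.1, fun Z hZ => ?_⟩
    obtain ⟨M, hM, hZM⟩ := exists_isMaximalCubeOf_superset ⟨hZ, Z, isCubeS_cubeAt c Z⟩
    rw [← cubeAt_subset_cubeAt_iff, ← huniq M ⟨hM, hZM (self_mem_cubeAt c Z)⟩]
    exact hZM
  · rintro ⟨Y, hY, hmax⟩
    have hsub : ∀ B, IsCubeOf C B → c ∈ B → B ⊆ cubeAt c Y := by
      rintro B ⟨hBC, Z, hZ⟩ hcB
      rw [hZ.eq_cubeAt hcB] at hBC ⊢
      exact cubeAt_subset_cubeAt_iff.2 (hmax Z hBC)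
    have hcube : IsCubeOf C (cubeAt c Y) := ⟨hY, Y, isCubeS_cubeAt c Y⟩
    refine ⟨hY (self_mem_cubeAt c Y), cubeAt c Y,
      ⟨⟨hcube, fun B hB hYB => hYB.antisymm (hsub B hB (hYB (self_mem_cubeAt c Y)))⟩,
        self_mem_cubeAt c Y⟩, ?_⟩
    rintro B ⟨hBmax, hcB⟩
    exact hBmax.2 _ hcube (hsub B hBmax.1 hcB)

end Corners

section Isometry
variable {α : Type} [Fintype α] [DecidableEq α] {C : Finset (Finset α)} {c : Finset α}

lemma hdist_le_length {u v : C} (p : (oneInclusionGraph C).Walk u v) :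
    hdist u.1 v.1 ≤ p.length := by
  induction p with
  | nil => simp
  | @cons u w v huw p ih =>
    have : hdist u.1 w.1 = 1 := huw
    have := hdist_triangle u.1 w.1 v.1
    rw [SimpleGraph.Walk.length_cons]
    omega

lemma exists_step_of_dist_eq_hdist {u v : Finset α} {hu : u ∈ C} {hv : v ∈ C}
    (huv : (oneInclusionGraph C).Reachable ⟨u, hu⟩ ⟨v, hv⟩)
    (hd : (oneInclusionGraph C).dist ⟨u, hu⟩ ⟨v, hv⟩ = hdist u v) (hne : u ≠ v) :
    ∃ w ∈ C, hdist u w = 1 ∧ hdist w v + 1 = hdist u v := by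
  obtain ⟨p, hp⟩ := huv.exists_walk_length_eq_dist
  cases p with
  | nil => exact absurd rfl hne
  | @cons _ w _ huw q =>
    have : hdist w.1 v ≤ q.length := hdist_le_length q
    have := hdist_triangle u w.1 v
    have : hdist u w.1 = 1 := huw
    rw [SimpleGraph.Walk.length_cons] at hp
    exact ⟨w.1, w.2, huw, by omega⟩

lemma exists_walk_length_eq_hdist
    (hstep : ∀ u ∈ C, ∀ v ∈ C, u ≠ v → ∃ w ∈ C, hdist u w = 1 ∧ hdist w v + 1 = hdist u v)
    (u v : C) : ∃ p : (oneInclusionGraph C).Walk u v, p.length = hdist u.1 v.1 := by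
  induction h : hdist u.1 v.1 generalizing u with
  | zero =>
    obtain rfl : u = v := Subtype.ext (hdist_eq_zero.1 h)
    exact ⟨.nil, rfl⟩
  | succ n ih =>
    obtain ⟨w, hw, huw, hwv⟩ :=
      hstep u.1 u.2 v.1 v.2 (fun huv => by simp [huv] at h)
    obtain ⟨p, hp⟩ := ih ⟨w, hw⟩ (show hdist w v.1 = n by omega)
    exact ⟨.cons (show (oneInclusionGraph C).Adj u ⟨w, hw⟩ from huw) p,
      by rw [SimpleGraph.Walk.length_cons, hp]⟩

lemma dist_eq_hdist_of_walk {u v : C} (p : (oneInclusionGraph C).Walk u v)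
    (hp : p.length = hdist u.1 v.1) : (oneInclusionGraph C).dist u v = hdist u.1 v.1 := by
  obtain ⟨q, hq⟩ := (SimpleGraph.Walk.reachable p).exists_walk_length_eq_dist
  exact le_antisymm (hp ▸ SimpleGraph.dist_le p) (hq ▸ hdist_le_length q)

lemma isIsometric_iff_exists_step : IsIsometric C ↔ C.Nonempty ∧
    ∀ u ∈ C, ∀ v ∈ C, u ≠ v → ∃ w ∈ C, hdist u w = 1 ∧ hdist w v + 1 = hdist u v := by
  constructor
  · rintro ⟨hconn, hd⟩
    refine ⟨Finset.nonempty_coe_sort.1 hconn.nonempty, fun u hu v hv huv => ?_⟩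
    exact exists_step_of_dist_eq_hdist (hconn.preconnected ⟨u, hu⟩ ⟨v, hv⟩) (hd _ _) huv
  · rintro ⟨hne, hstep⟩
    have hwalk := exists_walk_length_eq_hdist hstep
    have : Nonempty C := Finset.nonempty_coe_sort.2 hne
    refine ⟨(SimpleGraph.connected_iff _).2 ⟨fun u v => ?_, this⟩, fun u v => ?_⟩
    · obtain ⟨p, -⟩ := hwalk u v
      exact p.reachable
    · obtain ⟨p, hp⟩ := hwalk u v
      exact dist_eq_hdist_of_walk p hp

lemma IsIsometric.isWeaklyIsometric (h : IsIsometric C) : IsWeaklyIsometric C :=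
  ⟨h.1, fun u v _ => h.2 u v⟩

lemma IsWeaklyIsometric.exists_middle (h : IsWeaklyIsometric C) {a b : Finset α} (ha : a ∈ C)
    (hb : b ∈ C) (hab : hdist a b = 2) : ∃ m ∈ C, hdist a m = 1 ∧ hdist m b = 1 := by
  obtain ⟨m, hm, ham, hmb⟩ := exists_step_of_dist_eq_hdist (h.1.preconnected ⟨a, ha⟩ ⟨b, hb⟩)
    (h.2 _ _ hab.le) (by rintro rfl; simp at hab)
  exact ⟨m, hm, ham, by omega⟩

lemma IsIsometric.of_insert (hiso : IsIsometric (insert c C)) (hne : C.Nonempty)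
    (hbypass : ∀ a ∈ C, ∀ b ∈ C, hdist a c = 1 → hdist c b = 1 → hdist a b = 2 →
      ∃ m ∈ C, hdist a m = 1 ∧ hdist m b = 1) : IsIsometric C := by
  rw [isIsometric_iff_exists_step] at hiso ⊢
  refine ⟨hne, fun u hu v hv huv => ?_⟩
  obtain ⟨w, hw, huw, hwv⟩ :=
    hiso.2 u (Finset.mem_insert_of_mem hu) v (Finset.mem_insert_of_mem hv) huv
  by_cases hwC : w ∈ C
  · exact ⟨w, hwC, huw, hwv⟩
  obtain rfl : w = c := (Finset.mem_insert.1 hw).resolve_right hwC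
  obtain ⟨w₂, hw₂, hww₂, hw₂v⟩ :=
    hiso.2 w hw v (Finset.mem_insert_of_mem hv) (fun h => hwC (h ▸ hv))
  have hw₂C : w₂ ∈ C := (Finset.mem_insert.1 hw₂).resolve_left
    (fun h => by simp [h] at hww₂)
  have := hdist_triangle u w w₂
  have := hdist_triangle u w₂ v
  obtain ⟨m, hm, hum, hmw₂⟩ := hbypass u hu w₂ hw₂C huw hww₂ (by omega)
  have := hdist_triangle m w₂ v
  have := hdist_triangle u m v
  exact ⟨m, hm, hum, by omega⟩

lemma IsIsometric.of_insert_of_isWeaklyIsometric (hiso : IsIsometric (insert c C))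
    (hw : IsWeaklyIsometric C) : IsIsometric C :=
  hiso.of_insert (Finset.nonempty_coe_sort.1 hw.1.nonempty)
    fun _ ha _ hb _ _ hab => hw.exists_middle ha hb hab

lemma IsIsometric.of_insert_of_isCornerOf (hiso : IsIsometric (insert c C))
    (hcor : IsCornerOf (insert c C) c) (hne : C.Nonempty) : IsIsometric C := by
  obtain ⟨Y, hY, hmax⟩ := isCornerOf_iff.1 hcor
  have hedge : ∀ d ∈ C, hdist c d = 1 → c ∆ d ⊆ Y := fun d hd hcd =>
    hmax _ ((cubeAt_symmDiff_subset_pair hcd).trans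
      (Finset.insert_subset_insert c (Finset.singleton_subset_iff.2 hd)))
  refine hiso.of_insert hne fun a ha b hb hac hcb hab => ?_
  -- the fourth vertex of the square spanned by the edges `ca` and `cb` lies in the corner's cube
  have hm : a ∆ c ∆ b ∈ cubeAt c Y := by
    rw [mem_cubeAt, symmDiff_assoc, symmDiff_left_comm, symmDiff_symmDiff_cancel_left]
    refine (symmDiff_triangle a c b).trans (Finset.union_subset ?_ (hedge b hb hcb))
    exact symmDiff_comm a c ▸ hedge a ha (hdist_comm a c ▸ hac)
  have hmc : a ∆ c ∆ b ≠ c := by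
    intro h
    rw [symmDiff_right_comm, symmDiff_eq_right, symmDiff_eq_bot] at h
    simp [h] at hab
  refine ⟨a ∆ c ∆ b, (Finset.mem_insert.1 (hY hm)).resolve_left hmc, ?_, ?_⟩
  · rwa [hdist_eq_card_symmDiff, symmDiff_assoc, symmDiff_symmDiff_cancel_left]
  · rwa [hdist_eq_card_symmDiff, symmDiff_symmDiff_cancel_right]

end Isometry

section Shattering
variable {α : Type*} [DecidableEq α] {C : Finset (Finset α)} {x : α} {Y : Finset α}

lemma Finset.Shatters.notMem_of_forall_notMem (hY : C.Shatters Y) (h : ∀ s ∈ C, x ∉ s) :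
    x ∉ Y := by
  obtain ⟨s, hs, hYs⟩ := hY.exists_superset
  exact fun hx => h s hs (hYs hx)

lemma Finset.Shatters.inter_ne_of_insert {c : Finset α} (hY : (insert c C).Shatters Y)
    (hnY : ¬ C.Shatters Y) : ∀ d ∈ C, Y ∩ d ≠ Y ∩ c := by
  refine fun d hd hdc => hnY fun t ht => ?_
  obtain ⟨e, he, rfl⟩ := hY ht
  rcases Finset.mem_insert.1 he with rfl | he
  · exact ⟨d, hd, hdc⟩
  · exact ⟨e, he, rfl⟩

end Shattering

section RestrictionReduction
variable {α : Type} [DecidableEq α] {C : Finset (Finset α)} {x : α} {Y : Finset α}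

lemma restrictX_eq_memberSubfamily_union (C : Finset (Finset α)) (x : α) :
    restrictX C x = C.memberSubfamily x ∪ C.nonMemberSubfamily x :=
  (Finset.memberSubfamily_union_nonMemberSubfamily x C).symm

lemma mem_reduction {s : Finset α} : s ∈ reduction C x ↔ s ∈ C ∧ x ∉ s ∧ insert x s ∈ C := by
  simp [reduction]

lemma reduction_eq_memberSubfamily_inter (C : Finset (Finset α)) (x : α) :
    reduction C x = C.memberSubfamily x ∩ C.nonMemberSubfamily x := by
  ext s
  simp only [mem_reduction, Finset.mem_inter, Finset.mem_memberSubfamily,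
    Finset.mem_nonMemberSubfamily]
  tauto

lemma card_restrictX_add_card_reduction (C : Finset (Finset α)) (x : α) :
    #(restrictX C x) + #(reduction C x) = #C := by
  rw [restrictX_eq_memberSubfamily_union, reduction_eq_memberSubfamily_inter,
    Finset.card_union_add_card_inter, Finset.card_memberSubfamily_add_card_nonMemberSubfamily]

lemma notMem_of_mem_restrictX {s : Finset α} (hs : s ∈ restrictX C x) : x ∉ s := by
  obtain ⟨t, -, rfl⟩ := Finset.mem_image.1 hs
  exact Finset.notMem_erase x t

lemma Finset.Shatters.of_restrictX (h : (restrictX C x).Shatters Y) : C.Shatters Y := by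
  have hxY : x ∉ Y := h.notMem_of_forall_notMem fun _ => notMem_of_mem_restrictX
  intro t ht
  obtain ⟨u, hu, rfl⟩ := h ht
  obtain ⟨s, hs, rfl⟩ := Finset.mem_image.1 hu
  refine ⟨s, hs, ?_⟩
  rw [Finset.inter_erase, Finset.erase_eq_of_notMem fun hx => hxY (Finset.mem_inter.1 hx).1]

lemma Finset.Shatters.insert_of_reduction (h : (reduction C x).Shatters Y) :
    C.Shatters (insert x Y) := by
  have hxY : x ∉ Y := h.notMem_of_forall_notMem fun _ hs => (mem_reduction.1 hs).2.1
  intro t ht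
  obtain ⟨u, hu, hut⟩ := h (Finset.subset_insert_iff.1 ht)
  obtain ⟨huC, hxu, hxuC⟩ := mem_reduction.1 hu
  by_cases hxt : x ∈ t
  · exact ⟨insert x u, hxuC, by rw [← Finset.insert_inter_distrib, hut, Finset.insert_erase hxt]⟩
  · exact ⟨u, huC, by rw [Finset.insert_inter_of_notMem hxu, hut, Finset.erase_eq_of_notMem hxt]⟩

/-- The injection behind Pajor's inequality `|C| ≤ |X̄(C)|`. -/
lemma shatterer_restrictX_union_image_insert_subset (C : Finset (Finset α)) (x : α) :
    (restrictX C x).shatterer ∪ (reduction C x).shatterer.image (insert x) ⊆ C.shatterer := by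
  refine Finset.union_subset (fun Y hY => ?_) (fun Y hY => ?_)
  · exact Finset.mem_shatterer.2 (Finset.mem_shatterer.1 hY).of_restrictX
  · obtain ⟨Z, hZ, rfl⟩ := Finset.mem_image.1 hY
    exact Finset.mem_shatterer.2 (Finset.mem_shatterer.1 hZ).insert_of_reduction

lemma card_shatterer_restrictX_union_image_insert (C : Finset (Finset α)) (x : α) :
    #((restrictX C x).shatterer ∪ (reduction C x).shatterer.image (insert x)) =
      #(restrictX C x).shatterer + #(reduction C x).shatterer := by
  have hx : ∀ Z ∈ (reduction C x).shatterer, x ∉ Z := fun Z hZ =>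
    (Finset.mem_shatterer.1 hZ).notMem_of_forall_notMem fun _ hs => (mem_reduction.1 hs).2.1
  rw [Finset.card_union_of_disjoint, Finset.card_image_of_injOn]
  · intro Z₁ hZ₁ Z₂ hZ₂ h
    rw [← Finset.erase_insert (hx Z₁ hZ₁), ← Finset.erase_insert (hx Z₂ hZ₂), h]
  · refine Finset.disjoint_left.2 fun Y hY hY' => ?_
    obtain ⟨Z, -, rfl⟩ := Finset.mem_image.1 hY'
    exact (Finset.mem_shatterer.1 hY).notMem_of_forall_notMem
      (fun _ => notMem_of_mem_restrictX) (Finset.mem_insert_self x Z)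

end RestrictionReduction

section Ample
variable {α : Type} [Fintype α] [DecidableEq α] {C : Finset (Finset α)} {Y : Finset α}

lemma shatteredSets_eq_shatterer (C : Finset (Finset α)) : shatteredSets C = C.shatterer := by
  ext Y
  simp only [shatteredSets, Shatters, Finset.mem_filter, Finset.mem_univ, true_and,
    Finset.mem_shatterer, Finset.Shatters, Finset.mem_powerset, Finset.inter_comm Y]

lemma isAmple_iff : IsAmple C ↔ #C = #C.shatterer := by
  rw [IsAmple, shatteredSets_eq_shatterer]

lemma isAmple_empty : IsAmple (∅ : Finset (Finset α)) :=
  isAmple_iff.2 (by simp [Finset.shatterer])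

lemma IsAmple.shatterer_restrictX_union_image_insert (hA : IsAmple C) (x : α) :
    (restrictX C x).shatterer ∪ (reduction C x).shatterer.image (insert x) = C.shatterer := by
  have := card_shatterer_restrictX_union_image_insert C x
  have := card_restrictX_add_card_reduction C x
  have := Finset.card_le_card_shatterer (restrictX C x)
  have := Finset.card_le_card_shatterer (reduction C x)
  have := isAmple_iff.1 hA
  exact Finset.eq_of_subset_of_card_le (shatterer_restrictX_union_image_insert_subset C x)
    (by omega)

lemma IsAmple.isAmple_reduction (hA : IsAmple C) (x : α) : IsAmple (reduction C x) := by
  have := card_shatterer_restrictX_union_image_insert C x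
  rw [hA.shatterer_restrictX_union_image_insert x] at this
  have := card_restrictX_add_card_reduction C x
  have := Finset.card_le_card_shatterer (restrictX C x)
  have := Finset.card_le_card_shatterer (reduction C x)
  have := isAmple_iff.1 hA
  exact isAmple_iff.2 (by omega)

lemma IsAmple.shatters_reduction_erase (hA : IsAmple C) {x : α} (hY : C.Shatters Y)
    (hxY : x ∈ Y) : (reduction C x).Shatters (Y.erase x) := by
  rw [← Finset.mem_shatterer, ← hA.shatterer_restrictX_union_image_insert x,
    Finset.mem_union] at hY
  rcases hY with hY | hY
  · exact absurd hxY ((Finset.mem_shatterer.1 hY).notMem_of_forall_notMem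
      fun _ => notMem_of_mem_restrictX)
  · obtain ⟨Z, hZ, rfl⟩ := Finset.mem_image.1 hY
    rw [Finset.erase_insert ((Finset.mem_shatterer.1 hZ).notMem_of_forall_notMem
      fun _ hs => (mem_reduction.1 hs).2.1)]
    exact Finset.mem_shatterer.1 hZ

lemma IsAmple.exists_cubeAt_subset (hA : IsAmple C) (hY : C.Shatters Y) :
    ∃ t, cubeAt t Y ⊆ C := by
  induction Y using Finset.induction_on generalizing C with
  | empty =>
    obtain ⟨t, ht⟩ := Finset.shatters_empty.1 hY
    refine ⟨t, fun d hd => ?_⟩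
    rw [mem_cubeAt, Finset.subset_empty, ← Finset.bot_eq_empty, symmDiff_eq_bot] at hd
    exact hd ▸ ht
  | insert x Y hxY ih =>
    have hYD := hA.shatters_reduction_erase hY (Finset.mem_insert_self x Y)
    rw [Finset.erase_insert hxY] at hYD
    obtain ⟨t, ht⟩ := ih (hA.isAmple_reduction x) hYD
    have hxt : x ∉ t := (mem_reduction.1 (ht (self_mem_cubeAt t Y))).2.1
    refine ⟨t, fun d hd => ?_⟩
    have hd' : d.erase x ∈ cubeAt t Y := by
      rw [mem_cubeAt] at hd ⊢
      intro z hz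
      have hzx : z ≠ x := by
        rintro rfl
        simp [Finset.mem_symmDiff, hxt] at hz
      have : z ∈ t ∆ d := by simpa [Finset.mem_symmDiff, hzx] using hz
      exact (Finset.mem_insert.1 (hd this)).resolve_left hzx
    obtain ⟨hdC, -, hxdC⟩ := mem_reduction.1 (ht hd')
    by_cases hxd : x ∈ d
    · rwa [Finset.insert_erase hxd] at hxdC
    · rwa [Finset.erase_eq_of_notMem hxd] at hdC

end Ample

section Insertion
variable {α : Type} [Fintype α] [DecidableEq α] {C : Finset (Finset α)} {c : Finset α}
  {Y Z : Finset α}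

/-- The first step of a geodesic from `c` to a concept realising the pattern of `c` flipped at
`x` must flip `x` itself: any other flip keeps the pattern of `c` on `Y`, which `C` misses. -/
lemma symmDiff_singleton_mem_of_shatters_insert (hiso : IsIsometric (insert c C))
    (hY : (insert c C).Shatters Y) (hnY : ¬ C.Shatters Y) {x : α} (hx : x ∈ Y) :
    c ∆ {x} ∈ C := by
  have hmiss := hY.inter_ne_of_insert hnY
  obtain ⟨d, hd, hdY⟩ := hY (t := (Y ∩ c) ∆ {x}) (symmDiff_le_sup.trans
    (Finset.union_subset Finset.inter_subset_left (Finset.singleton_subset_iff.2 hx)))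
  have hdc : d ≠ c := by
    rintro rfl
    exact Finset.singleton_ne_empty x (symmDiff_eq_left.1 hdY.symm)
  obtain ⟨w, hw, hcw, hwd⟩ := (isIsometric_iff_exists_step.1 hiso).2 c
    (Finset.mem_insert_self c C) d hd hdc.symm
  rw [hdist_eq_card_symmDiff, Finset.card_eq_one] at hcw
  obtain ⟨z, hz⟩ := hcw
  obtain rfl : w = c ∆ {z} := by rw [← hz, symmDiff_symmDiff_cancel_left]
  have hwC : c ∆ {z} ∈ C := (Finset.mem_insert.1 hw).resolve_left (symmDiff_singleton_ne c z)
  have hzY : z ∈ Y := by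
    by_contra hzY
    exact hmiss _ hwC (inter_symmDiff_singleton_of_notMem hzY)
  have hzcd : z ∈ c ∆ d := by
    by_contra hzcd
    rw [hdist_symmDiff_singleton_of_notMem hzcd] at hwd
    omega
  have hYcd : Y ∩ (c ∆ d) = {x} := by
    rw [← Finset.inf_eq_inter, inf_symmDiff_distrib_left, Finset.inf_eq_inter,
      Finset.inf_eq_inter, hdY, symmDiff_symmDiff_cancel_left]
  obtain rfl : z = x := Finset.mem_singleton.1 (hYcd ▸ Finset.mem_inter.2 ⟨hzY, hzcd⟩)
  exact hwC

lemma subset_of_shatters_insert (hiso : IsIsometric (insert c C))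
    (hY : (insert c C).Shatters Y) (hnY : ¬ C.Shatters Y)
    (hZ : (insert c C).Shatters Z) (hnZ : ¬ C.Shatters Z) : Y ⊆ Z := by
  intro x hx
  by_contra hxZ
  exact hZ.inter_ne_of_insert hnZ _ (symmDiff_singleton_mem_of_shatters_insert hiso hY hnY hx)
    (inter_symmDiff_singleton_of_notMem hxZ)

lemma card_shatterer_insert_le (hiso : IsIsometric (insert c C)) :
    #(insert c C).shatterer ≤ #C.shatterer + 1 := by
  have hnew : #((insert c C).shatterer \ C.shatterer) ≤ 1 := by
    refine Finset.card_le_one.2 fun Y hY Z hZ => ?_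
    simp only [Finset.mem_sdiff, Finset.mem_shatterer] at hY hZ
    exact (subset_of_shatters_insert hiso hY.1 hY.2 hZ.1 hZ.2).antisymm
      (subset_of_shatters_insert hiso hZ.1 hZ.2 hY.1 hY.2)
  have := Finset.card_le_card_sdiff_add_card (s := (insert c C).shatterer) (t := C.shatterer)
  omega

lemma IsAmple.insert_of_isIsometric (hA : IsAmple C) (hc : c ∉ C)
    (hiso : IsIsometric (insert c C)) : IsAmple (insert c C) := by
  have := card_shatterer_insert_le hiso
  have := Finset.card_le_card_shatterer (insert c C)
  have := isAmple_iff.1 hA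
  have := Finset.card_insert_of_notMem hc
  exact isAmple_iff.2 (by omega)

lemma IsAmple.isCornerOf_insert (hA : IsAmple C) (hc : c ∉ C) (hA' : IsAmple (insert c C)) :
    IsCornerOf (insert c C) c := by
  obtain ⟨Y, hY, hnY⟩ : ∃ Y ∈ (insert c C).shatterer, Y ∉ C.shatterer := by
    apply Finset.exists_mem_notMem_of_card_lt_card
    have := isAmple_iff.1 hA
    have := isAmple_iff.1 hA'
    have := Finset.card_insert_of_notMem hc
    omega
  rw [Finset.mem_shatterer] at hY hnY
  obtain ⟨t, ht⟩ := hA'.exists_cubeAt_subset hY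
  have hct : c ∈ cubeAt t Y := by
    by_contra hct
    exact hnY ((cubeAt_shatters t Y).mono_left fun d hd =>
      (Finset.mem_insert.1 (ht hd)).resolve_left fun h => hct (h ▸ hd))
  rw [← cubeAt_eq_of_mem hct] at ht
  refine isCornerOf_iff.2 ⟨Y, ht, fun Z hZ z hz => ?_⟩
  by_contra hzY
  have hflip : c ∆ {z} ∈ cubeAt c Z := by
    rw [mem_cubeAt, symmDiff_symmDiff_cancel_left]
    exact Finset.singleton_subset_iff.2 hz
  exact hY.inter_ne_of_insert hnY _
    ((Finset.mem_insert.1 (hZ hflip)).resolve_left (symmDiff_singleton_ne c z))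
    (inter_symmDiff_singleton_of_notMem hzY)

end Insertion

section LevelSets
variable {β : Type*} [DecidableEq β] {l : List β}

lemma List.toFinset_take_add_one {i : ℕ} (h : i < l.length) :
    (l.take (i + 1)).toFinset = insert l[i] (l.take i).toFinset := by
  rw [← List.take_append_getElem h, List.toFinset_append, Finset.union_comm]
  simp

lemma List.Nodup.getElem_notMem_toFinset_take (hl : l.Nodup) {i : ℕ} (h : i < l.length) :
    l[i] ∉ (l.take i).toFinset := by
  rw [List.mem_toFinset, List.mem_take_iff_getElem]
  rintro ⟨j, hj, hji⟩
  have := (hl.getElem_inj_iff).1 hji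
  omega

lemma List.toFinset_take_nonempty {i : ℕ} (hi : 0 < i) (hil : i ≤ l.length) :
    (l.take i).toFinset.Nonempty := by
  rw [List.toFinset_nonempty_iff, Ne, List.take_eq_nil_iff]
  rintro (rfl | rfl) <;> simp_all

lemma List.toFinset_take_decreasing_induction {P : Finset β → Prop} (htop : P l.toFinset)
    (hstep : ∀ i (h : i < l.length), 0 < i → P (insert l[i] (l.take i).toFinset) →
      P (l.take i).toFinset) :
    ∀ i, 0 < i → i ≤ l.length → P (l.take i).toFinset := by
  intro i hi hil
  refine Nat.decreasingInduction (motive := fun k _ => 0 < k → P (l.take k).toFinset)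
    (fun k hk ih hk₀ => hstep k hk hk₀ ?_) (fun _ => by simpa using htop) hil hi
  exact List.toFinset_take_add_one hk ▸ ih k.succ_pos

end LevelSets

section Orderings
variable {α : Type} [Fintype α] [DecidableEq α] {l : List (Finset α)}

lemma isCornerOf_take_of_isAmple (hnd : l.Nodup)
    (hA : ∀ i, 0 < i → i ≤ l.length → IsAmple (l.take i).toFinset) (i : ℕ) (h : i < l.length) :
    IsCornerOf (l.take (i + 1)).toFinset (l.get ⟨i, h⟩) := by
  have hAi : IsAmple (l.take i).toFinset := by
    rcases i.eq_zero_or_pos with rfl | hi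
    · simpa using isAmple_empty
    · exact hA i hi h.le
  have hAi' := hA (i + 1) i.succ_pos h
  rw [List.toFinset_take_add_one h] at hAi' ⊢
  exact hAi.isCornerOf_insert (hnd.getElem_notMem_toFinset_take h) hAi'

lemma isAmple_take_of_isIsometric (hnd : l.Nodup)
    (hI : ∀ i, 0 < i → i ≤ l.length → IsIsometric (l.take i).toFinset) :
    ∀ i, 0 < i → i ≤ l.length → IsAmple (l.take i).toFinset := by
  suffices ∀ i ≤ l.length, IsAmple (l.take i).toFinset from fun i _ => this i
  intro i hil
  induction i with
  | zero => simpa using isAmple_empty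
  | succ i ih =>
    have hI' := hI (i + 1) i.succ_pos hil
    rw [List.toFinset_take_add_one hil] at hI' ⊢
    exact (ih (by omega)).insert_of_isIsometric (hnd.getElem_notMem_toFinset_take hil) hI'

lemma isIsometric_take_of_isCornerOf (hC : IsIsometric l.toFinset)
    (hB : ∀ i (h : i < l.length), IsCornerOf (l.take (i + 1)).toFinset (l.get ⟨i, h⟩)) :
    ∀ i, 0 < i → i ≤ l.length → IsIsometric (l.take i).toFinset :=
  List.toFinset_take_decreasing_induction hC fun i h hi hiso =>
    hiso.of_insert_of_isCornerOf (List.toFinset_take_add_one h ▸ hB i h)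
      (List.toFinset_take_nonempty hi h.le)

lemma isIsometric_take_of_isWeaklyIsometric (hC : IsIsometric l.toFinset)
    (hW : ∀ i, 0 < i → i ≤ l.length → IsWeaklyIsometric (l.take i).toFinset) :
    ∀ i, 0 < i → i ≤ l.length → IsIsometric (l.take i).toFinset :=
  List.toFinset_take_decreasing_induction hC fun i h hi hiso =>
    hiso.of_insert_of_isWeaklyIsometric (hW i hi h.le)

end Orderings

/-- For an ordering of an isometric concept class, the following are
equivalent: every level set is ample; every element is a corner of its level set;
every level set is isometric; every level set is weakly isometric. -/
theorem stmt_2 (C : Finset (Finset X)) (hC : IsIsometric C)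
    (l : List (Finset X)) (hnd : l.Nodup) (hl : l.toFinset = C) :
    ((∀ i, 0 < i → i ≤ l.length → IsAmple (l.take i).toFinset) ↔
      (∀ i (h : i < l.length), IsCornerOf ((l.take (i + 1)).toFinset) (l.get ⟨i, h⟩))) ∧
    ((∀ i, 0 < i → i ≤ l.length → IsAmple (l.take i).toFinset) ↔
      (∀ i, 0 < i → i ≤ l.length → IsIsometric (l.take i).toFinset)) ∧
    ((∀ i, 0 < i → i ≤ l.length → IsAmple (l.take i).toFinset) ↔
      (∀ i, 0 < i → i ≤ l.length → IsWeaklyIsometric (l.take i).toFinset)) := by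
  subst hl
  have hAB := isCornerOf_take_of_isAmple hnd
  have hBI := isIsometric_take_of_isCornerOf hC
  have hIA := isAmple_take_of_isIsometric hnd
  have hWI := isIsometric_take_of_isWeaklyIsometric hC
  have hIW : (∀ i, 0 < i → i ≤ l.length → IsIsometric (l.take i).toFinset) →
      ∀ i, 0 < i → i ≤ l.length → IsWeaklyIsometric (l.take i).toFinset :=
    fun h i hi hil => (h i hi hil).isWeaklyIsometric
  exact ⟨⟨hAB, hIA ∘ hBI⟩, ⟨hBI ∘ hAB, hIA⟩, ⟨hIW ∘ hBI ∘ hAB, hIA ∘ hWI⟩⟩
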